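/- arXiv:0909.2983 — 5 statements merged into one kernel-verified Lean document; each statement's English description precedes it below -/
import Mathlib

section
/- For positive integers m and n with n > 1, the sum over divisors d of n of μ(d)·2^(⌊(m+1)/d⌋ − ⌊(m−1)/d⌋) equals 1 if gcd(m,n) > 1 and gcd(m+1,n) > 1; equals 2 if exactly one of gcd(m,n), gcd(m+1,n) equals 1; and equals 3 if gcd(m,n) = gcd(m+1,n) = 1. -/
/-! For `m ≥ 1` the exponent `⌊(m+1)/d⌋ - ⌊(m-1)/d⌋` counts which of `m`, `m + 1` are multiples of
`d`, and since `d` divides both only when `d = 1`,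
`2 ^ exponent = 1 + [d ∣ m] + [d ∣ m + 1] + [d ∣ 1]`.
Summing against `μ` over the divisors of `n`, each indicator `[d ∣ x]` contributes
`[gcd(x, n) = 1]` by Möbius inversion, and the constant `1` contributes `[n = 1] = 0`. -/

open ArithmeticFunction Finset
open scoped ArithmeticFunction.Moebius

namespace Nat

lemma sum_divisors_moebius (k : ℕ) : ∑ d ∈ k.divisors, (μ d : ℤ) = if k = 1 then 1 else 0 := by
  rw [← coe_mul_zeta_apply, moebius_mul_coe_zeta, one_apply]

lemma divisors_filter_dvd_eq_divisors_gcd {n : ℕ} (hn : n ≠ 0) (x : ℕ) :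
    {d ∈ n.divisors | d ∣ x} = (x.gcd n).divisors := by
  rw [← divisors_filter_dvd_of_dvd hn (gcd_dvd_right x n)]
  refine filter_congr fun d hd ↦ ?_
  rw [dvd_gcd_iff, and_iff_left (dvd_of_mem_divisors hd)]

lemma sum_divisors_moebius_mul_ite_dvd {n : ℕ} (hn : n ≠ 0) (x : ℕ) :
    ∑ d ∈ n.divisors, (μ d : ℤ) * (if d ∣ x then 1 else 0) = if x.gcd n = 1 then 1 else 0 := by
  rw [sum_congr rfl fun _ _ ↦ mul_boole .., ← sum_filter,
    divisors_filter_dvd_eq_divisors_gcd hn, sum_divisors_moebius]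

lemma add_one_div_sub_sub_one_div {m : ℕ} (hm : 0 < m) (d : ℕ) :
    (m + 1) / d - (m - 1) / d = (if d ∣ m then 1 else 0) + (if d ∣ m + 1 then 1 else 0) := by
  obtain ⟨k, rfl⟩ : ∃ k, m = k + 1 := ⟨m - 1, by omega⟩
  rw [Nat.add_sub_cancel, Nat.succ_div (a := k + 1), Nat.succ_div (a := k)]
  omega

lemma two_pow_add_one_div_sub_sub_one_div {m : ℕ} (hm : 0 < m) (d : ℕ) :
    (2 : ℤ) ^ ((m + 1) / d - (m - 1) / d) =
      1 + (if d ∣ m then 1 else 0) + (if d ∣ m + 1 then 1 else 0) + (if d ∣ 1 then 1 else 0) := by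
  have hboth : d ∣ m ∧ d ∣ m + 1 ↔ d ∣ 1 :=
    ⟨fun h ↦ (Nat.dvd_add_right h.1).mp h.2, fun h ↦ ⟨h.trans (one_dvd m), h.trans (one_dvd _)⟩⟩
  simp only [add_one_div_sub_sub_one_div hm, ← hboth]
  by_cases h₁ : d ∣ m <;> by_cases h₂ : d ∣ m + 1 <;> simp [h₁, h₂]

end Nat

theorem stmt2 (m n : ℕ) (hm : 0 < m) (hn : 1 < n) :
    (∑ d ∈ n.divisors, (ArithmeticFunction.moebius d) * 2 ^ ((m + 1) / d - (m - 1) / d)) =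
      (if Nat.gcd m n = 1 then (if Nat.gcd (m + 1) n = 1 then 3 else 2)
       else (if Nat.gcd (m + 1) n = 1 then 2 else 1) : ℤ) := by
  have hn₀ : n ≠ 0 := by omega
  simp_rw [Nat.two_pow_add_one_div_sub_sub_one_div hm, mul_add, sum_add_distrib, mul_one,
    Nat.sum_divisors_moebius, Nat.sum_divisors_moebius_mul_ite_dvd hn₀, Nat.gcd_one_left]
  split_ifs <;> omega
end

section
/- For positive integers m and n with n > 1, the sum over divisors d of n of μ(d)·C(⌊(m+1)/d⌋ − ⌊(m−1)/d⌋ + 1, 2) equals 1 if gcd(m,n) > 1 and gcd(m+1,n) > 1; equals 2 if exactly one of gcd(m,n), gcd(m+1,n) equals 1; and equals 3 if gcd(m,n) = gcd(m+1,n) = 1. -/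
/-!
Among `m, m + 1` the number of multiples of `d` is `⌊(m+1)/d⌋ - ⌊(m-1)/d⌋`, and it is `2` only
for `d = 1`. Hence `C(k + 1, 2)` (which is `0, 1, 3` for `k = 0, 1, 2`) equals
`[d ∣ m] + [d ∣ m + 1] + [d ∣ 1]`, and the Möbius sum splits into three sums
`∑_{d ∣ n} μ(d) [d ∣ a] = [gcd(a, n) = 1]`, with `a = m, m + 1, 1`.
-/

open ArithmeticFunction ArithmeticFunction.Moebius Finset

lemma sum_divisors_moebius (k : ℕ) : ∑ d ∈ k.divisors, (μ d : ℤ) = if k = 1 then 1 else 0 := by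
  have h := congr($(moebius_mul_coe_zeta) k)
  rwa [coe_mul_zeta_apply, one_apply] at h

lemma sum_divisors_moebius_mul_ite_dvd (a : ℕ) {n : ℕ} (hn : n ≠ 0) :
    ∑ d ∈ n.divisors, (μ d : ℤ) * (if d ∣ a then 1 else 0) = if a.gcd n = 1 then 1 else 0 := by
  have hgcd : a.gcd n ≠ 0 := Nat.gcd_ne_zero_right hn
  have h_filter : n.divisors.filter (· ∣ a) = (a.gcd n).divisors := by
    ext d
    simp only [mem_filter, Nat.mem_divisors, Nat.dvd_gcd_iff]
    tauto
  rw [← sum_divisors_moebius, ← h_filter, sum_filter]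
  simp_rw [mul_boole]

lemma succ_div_sub_pred_div {m : ℕ} (hm : 0 < m) (d : ℕ) :
    (m + 1) / d - (m - 1) / d = (if d ∣ m then 1 else 0) + (if d ∣ m + 1 then 1 else 0) := by
  obtain ⟨k, rfl⟩ := Nat.exists_eq_add_one.mpr hm
  have h₁ : (k + 1 + 1) / d = (k + 1) / d + if d ∣ k + 1 + 1 then 1 else 0 := Nat.succ_div
  have h₀ : (k + 1) / d = k / d + if d ∣ k + 1 then 1 else 0 := Nat.succ_div
  rw [Nat.add_sub_cancel, h₁, h₀]
  omega

lemma choose_succ_div_sub_pred_div {m : ℕ} (hm : 0 < m) (d : ℕ) :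
    ((((m + 1) / d - (m - 1) / d + 1).choose 2 : ℕ) : ℤ) =
      (if d ∣ m then 1 else 0) + (if d ∣ m + 1 then 1 else 0) + (if d ∣ 1 then 1 else 0) := by
  have h_one : d ∣ 1 ↔ d ∣ m ∧ d ∣ m + 1 :=
    ⟨fun h ↦ ⟨h.trans (one_dvd m), h.trans (one_dvd _)⟩, fun ⟨h, h'⟩ ↦ (Nat.dvd_add_right h).mp h'⟩
  rw [succ_div_sub_pred_div hm]
  by_cases h : d ∣ m <;> by_cases h' : d ∣ m + 1 <;> simp [h, h', h_one]

theorem stmt4 (m n : ℕ) (hm : 0 < m) (hn : 1 < n) :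
    (∑ d ∈ n.divisors, (ArithmeticFunction.moebius d) *
        (Nat.choose ((m + 1) / d - (m - 1) / d + 1) 2 : ℤ)) =
      (if Nat.gcd m n = 1 then (if Nat.gcd (m + 1) n = 1 then 3 else 2)
       else (if Nat.gcd (m + 1) n = 1 then 2 else 1) : ℤ) := by
  have hn0 : n ≠ 0 := by omega
  have h_sum : ∑ d ∈ n.divisors, (μ d : ℤ) * (((m + 1) / d - (m - 1) / d + 1).choose 2 : ℤ) =
      (if m.gcd n = 1 then 1 else 0) + (if (m + 1).gcd n = 1 then 1 else 0) + 1 := by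
    simp_rw [choose_succ_div_sub_pred_div hm, mul_add, sum_add_distrib,
      sum_divisors_moebius_mul_ite_dvd _ hn0, Nat.gcd_one_left, if_pos]
  rw [h_sum]
  split_ifs <;> norm_num
end

section
/- For positive integers l1 ≤ m1 < l2 ≤ m2, n and k ≥ 2, the number of k-element subsets X of [l1,m1] ∪ [l2,m2] containing both l1 and l2 with gcd(X ∪ {n}) = 1 equals the sum over common divisors d of l1, l2 and n of μ(d)·C(⌊m1/d⌋ + ⌊m2/d⌋ − (l1+l2)/d, k−2). -/
/-! For a set `X` containing `l1` and `l2`, `gcd (X ∪ {n})` divides `N = gcd (l1, l2, n)`, so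
Möbius inversion over the divisors of `N` replaces the condition `gcd (X ∪ {n}) = 1` by a signed
count, over `d ∣ N`, of the sets `X` consisting of multiples of `d`. These are the `k`-subsets of the
multiples of `d` in `[l1, m1] ∪ [l2, m2]` that contain `l1` and `l2`; there are
`m1 / d - l1 / d + 1 + m2 / d - l2 / d + 1` such multiples, whence the binomial coefficient. -/

open Finset ArithmeticFunction
open scoped ArithmeticFunction.Moebius

theorem Nat.card_filter_dvd_Icc {a b d : ℕ} (hd : 0 < d) (hda : d ∣ a) (hab : a ≤ b) :
    #{x ∈ Icc a b | d ∣ x} = b / d - a / d + 1 := by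
  obtain ⟨q, rfl⟩ := hda
  have hfilter : {x ∈ Icc (d * q) b | d ∣ x} = (Icc q (b / d)).image (d * ·) := by
    ext x
    simp only [mem_filter, mem_Icc, mem_image, Nat.le_div_iff_mul_le hd]
    constructor
    · rintro ⟨⟨hqx, hxb⟩, j, rfl⟩
      exact ⟨j, ⟨Nat.le_of_mul_le_mul_left hqx hd, by linarith⟩, rfl⟩
    · rintro ⟨j, ⟨hqj, hjb⟩, rfl⟩
      exact ⟨⟨Nat.mul_le_mul_left d hqj, by linarith⟩, dvd_mul_right d j⟩
  have hqb : q ≤ b / d := (Nat.le_div_iff_mul_le hd).2 (by linarith)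
  rw [hfilter, Finset.card_image_of_injective _ (mul_right_injective₀ hd.ne'), Nat.card_Icc,
    Nat.mul_div_cancel_left _ hd]
  omega

theorem Nat.card_filter_dvd_Icc_union_Icc_sub_two {l1 m1 l2 m2 d : ℕ} (hd : 0 < d)
    (h1 : l1 ≤ m1) (h12 : m1 < l2) (h2 : l2 ≤ m2) (hd1 : d ∣ l1) (hd2 : d ∣ l2) :
    #{x ∈ Icc l1 m1 ∪ Icc l2 m2 | d ∣ x} - 2 = m1 / d + m2 / d - (l1 + l2) / d := by
  have hdisj : Disjoint (Icc l1 m1) (Icc l2 m2) :=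
    disjoint_left.2 fun x hx hx' => by simp only [mem_Icc] at hx hx'; omega
  rw [filter_union, card_union_of_disjoint (disjoint_filter_filter hdisj),
    card_filter_dvd_Icc hd hd1 h1, card_filter_dvd_Icc hd hd2 h2, Nat.add_div_of_dvd_right hd1]
  have := Nat.div_le_div_right (c := d) h1
  have := Nat.div_le_div_right (c := d) h2
  omega

theorem Finset.powersetCard_filter {α : Type*} (p : α → Prop) [DecidablePred p] (s : Finset α)
    (k : ℕ) : (s.filter p).powersetCard k = {X ∈ s.powersetCard k | ∀ x ∈ X, p x} := by
  ext X
  simp only [mem_powersetCard, mem_filter, subset_iff]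
  grind

theorem card_filter_dvd_gcd_powersetCard_superset {A S : Finset ℕ} {d n k : ℕ} (hdn : d ∣ n)
    (hA : A ⊆ {x ∈ S | d ∣ x}) (hAk : #A ≤ k) :
    #{X ∈ {X ∈ S.powersetCard k | A ⊆ X} | d ∣ (X.gcd id).gcd n} =
      (#{x ∈ S | d ∣ x} - #A).choose (k - #A) := by
  have hdvd : ∀ X : Finset ℕ, d ∣ (X.gcd id).gcd n ↔ ∀ x ∈ X, d ∣ x := fun X => by
    simp [Nat.dvd_gcd_iff, Finset.dvd_gcd_iff, hdn]
  have hfilter : {X ∈ {X ∈ S.powersetCard k | A ⊆ X} | d ∣ (X.gcd id).gcd n} =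
      {X ∈ {x ∈ S | d ∣ x}.powersetCard k | A ⊆ X} := by
    rw [powersetCard_filter, filter_filter, filter_filter]
    exact filter_congr fun X _ => by rw [hdvd, and_comm]
  rw [hfilter, card_filter_powersetCard_subset A _ k hA hAk]

theorem card_filter_eq_one_eq_sum_moebius {ι : Type*} (s : Finset ι) (g : ι → ℕ) {N : ℕ}
    (hN : N ≠ 0) (hg : ∀ i ∈ s, g i ∣ N) :
    (#{i ∈ s | g i = 1} : ℤ) = ∑ d ∈ N.divisors, μ d * #{i ∈ s | d ∣ g i} := by
  have hindicator : ∀ i ∈ s, (if g i = 1 then 1 else 0 : ℤ) =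
      ∑ d ∈ N.divisors, if d ∣ g i then (μ d : ℤ) else 0 := by
    intro i hi
    rw [← sum_filter, Nat.divisors_filter_dvd_of_dvd hN (hg i hi), ← coe_mul_zeta_apply,
      moebius_mul_coe_zeta, one_apply]
  simp only [natCast_card_filter, mul_sum, mul_boole]
  rw [sum_congr rfl hindicator, sum_comm]

theorem stmt10_general (l1 m1 l2 m2 n k : ℕ) (h1 : l1 ≤ m1) (h12 : m1 < l2)
    (h2 : l2 ≤ m2) (hk : 2 ≤ k) :
    (((((Finset.Icc l1 m1) ∪ (Finset.Icc l2 m2)).powerset.filter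
        (fun X => l1 ∈ X ∧ l2 ∈ X ∧ X.card = k ∧ Nat.gcd (X.gcd id) n = 1)).card : ℤ)) =
      ∑ d ∈ (Nat.gcd l1 (Nat.gcd l2 n)).divisors, (ArithmeticFunction.moebius d) *
        (Nat.choose (m1 / d + m2 / d - (l1 + l2) / d) (k - 2) : ℤ) := by
  set S := Icc l1 m1 ∪ Icc l2 m2
  have hsplit : {X ∈ S.powerset | l1 ∈ X ∧ l2 ∈ X ∧ #X = k ∧ (X.gcd id).gcd n = 1} =
      {X ∈ {X ∈ S.powersetCard k | {l1, l2} ⊆ X} | (X.gcd id).gcd n = 1} := by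
    ext X
    simp only [mem_filter, mem_powerset, mem_powersetCard, insert_subset_iff,
      singleton_subset_iff]
    tauto
  have hgcd_dvd : ∀ X ∈ {X ∈ S.powersetCard k | {l1, l2} ⊆ X},
      (X.gcd id).gcd n ∣ l1.gcd (l2.gcd n) := by
    intro X hX
    obtain ⟨hX1, hX2⟩ := insert_subset_iff.1 (mem_filter.1 hX).2
    exact Nat.dvd_gcd ((Nat.gcd_dvd_left _ _).trans (Finset.gcd_dvd hX1))
      (Nat.gcd_dvd_gcd_of_dvd_left _ (Finset.gcd_dvd (singleton_subset_iff.1 hX2)))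
  rw [hsplit, card_filter_eq_one_eq_sum_moebius _ _ (Nat.gcd_pos_of_pos_right _ (Nat.gcd_pos_of_pos_left _ (by omega))).ne' hgcd_dvd]
  refine sum_congr rfl fun d hd => ?_
  obtain ⟨hdN, -⟩ := Nat.mem_divisors.1 hd
  have hd1 : d ∣ l1 := hdN.trans (Nat.gcd_dvd_left _ _)
  have hd2 : d ∣ l2 := hdN.trans ((Nat.gcd_dvd_right _ _).trans (Nat.gcd_dvd_left _ _))
  have hdn : d ∣ n := hdN.trans ((Nat.gcd_dvd_right _ _).trans (Nat.gcd_dvd_right _ _))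
  have hpair : #({l1, l2} : Finset ℕ) = 2 := card_pair (by omega)
  have hpair_sub : {l1, l2} ⊆ {x ∈ S | d ∣ x} := by
    simp [insert_subset_iff, S, h1, h2, hd1, hd2]
  rw [card_filter_dvd_gcd_powersetCard_superset hdn hpair_sub (hpair ▸ hk), hpair,
    Nat.card_filter_dvd_Icc_union_Icc_sub_two (Nat.pos_of_mem_divisors hd) h1 h12 h2 hd1 hd2]

theorem stmt10 (l1 m1 l2 m2 n k : ℕ) (hl1 : 0 < l1) (h1 : l1 ≤ m1) (h12 : m1 < l2)
    (h2 : l2 ≤ m2) (hn : 0 < n) (hk : 2 ≤ k) :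
    (((((Finset.Icc l1 m1) ∪ (Finset.Icc l2 m2)).powerset.filter
        (fun X => l1 ∈ X ∧ l2 ∈ X ∧ X.card = k ∧ Nat.gcd (X.gcd id) n = 1)).card : ℤ)) =
      ∑ d ∈ (Nat.gcd l1 (Nat.gcd l2 n)).divisors, (ArithmeticFunction.moebius d) *
        (Nat.choose (m1 / d + m2 / d - (l1 + l2) / d) (k - 2) : ℤ) :=
  stmt10_general l1 m1 l2 m2 n k h1 h12 h2 hk
end

section
/- For positive integers m1 < l2 ≤ m2 and n > 1, the number of nonempty subsets X of [1,m1] ∪ [l2,m2] with gcd(X ∪ {n}) = 1 equals the sum over divisors d of n of μ(d)·2^(⌊m1/d⌋ + ⌊m2/d⌋ − ⌊(l2−1)/d⌋). -/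
/-!
Möbius inversion writes the indicator of `gcd(k, n) = 1` as `∑_{d ∣ n, d ∣ k} μ(d)`. Summing over
the subsets `X ⊆ A` and exchanging the sums, each `d ∣ n` contributes `μ(d)` times the number of
subsets of `A` consisting of multiples of `d`, namely `2 ^ #{x ∈ A | d ∣ x}`. The empty subset
needs no correction because `gcd(0, n) = n ≠ 1`. For `A = [1, m1] ∪ [l2, m2]` the number of
multiples of `d` is `⌊m1/d⌋ + ⌊m2/d⌋ - ⌊(l2-1)/d⌋`.
-/

open Finset ArithmeticFunction
open scoped ArithmeticFunction.Moebius

theorem Nat.Ioc_filter_dvd_card_eq_div_sub {b c : ℕ} (hbc : b ≤ c) (p : ℕ) :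
    #{x ∈ Ioc b c | p ∣ x} = c / p - b / p := by
  have hsplit : {x ∈ Ioc b c | p ∣ x} = {x ∈ Ioc 0 c | p ∣ x} \ {x ∈ Ioc 0 b | p ∣ x} := by
    ext x; simp only [mem_filter, mem_Ioc, mem_sdiff]; omega
  rw [hsplit, card_sdiff_of_subset (filter_subset_filter _ (Ioc_subset_Ioc_right hbc)),
    Nat.Ioc_filter_dvd_card_eq_div, Nat.Ioc_filter_dvd_card_eq_div]

theorem card_filter_dvd_Icc_union_Icc {a b c : ℕ} (hab : a < b) (hbc : b ≤ c + 1) (p : ℕ) :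
    #{x ∈ Icc 1 a ∪ Icc b c | p ∣ x} = a / p + c / p - (b - 1) / p := by
  have hIcc : Icc 1 a ∪ Icc b c = Ioc 0 a ∪ Ioc (b - 1) c := by
    ext x; simp only [mem_union, mem_Icc, mem_Ioc]; omega
  have hdisj : Disjoint (Ioc 0 a) (Ioc (b - 1) c) :=
    disjoint_left.2 fun x hx hx' => by simp only [mem_Ioc] at hx hx'; omega
  rw [hIcc, filter_union, card_union_of_disjoint (disjoint_filter_filter hdisj),
    Nat.Ioc_filter_dvd_card_eq_div, Nat.Ioc_filter_dvd_card_eq_div_sub (by omega),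
    Nat.add_sub_assoc (Nat.div_le_div_right (by omega))]

theorem sum_moebius_divisors_filter_dvd {n : ℕ} (hn : n ≠ 0) (k : ℕ) :
    ∑ d ∈ n.divisors with d ∣ k, (μ d : ℤ) = if Nat.gcd k n = 1 then 1 else 0 := by
  have hdiv : {d ∈ n.divisors | d ∣ k} = (Nat.gcd k n).divisors := by
    ext d
    simp only [mem_filter, Nat.mem_divisors, Nat.dvd_gcd_iff, ne_eq, Nat.gcd_eq_zero_iff, hn,
      and_false, not_false_eq_true, and_true]
    exact and_comm
  rw [hdiv, ← coe_mul_zeta_apply, moebius_mul_coe_zeta, one_apply]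

theorem filter_powerset_dvd_gcd (A : Finset ℕ) (p : ℕ) :
    {X ∈ A.powerset | p ∣ X.gcd id} = {x ∈ A | p ∣ x}.powerset := by
  ext X
  simp only [mem_filter, mem_powerset, Finset.dvd_gcd_iff, id_eq, subset_iff]
  exact ⟨fun ⟨hA, hp⟩ x hx => ⟨hA hx, hp x hx⟩,
    fun h => ⟨fun x hx => (h hx).1, fun x hx => (h hx).2⟩⟩

theorem card_filter_powerset_gcd_coprime (A : Finset ℕ) {n : ℕ} (hn : 1 < n) :
    (#{X ∈ A.powerset | X.Nonempty ∧ Nat.gcd (X.gcd id) n = 1} : ℤ) =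
      ∑ d ∈ n.divisors, μ d * 2 ^ #{x ∈ A | d ∣ x} := by
  have hcoprime : {X ∈ A.powerset | X.Nonempty ∧ Nat.gcd (X.gcd id) n = 1} =
      {X ∈ A.powerset | Nat.gcd (X.gcd id) n = 1} := by
    refine filter_congr fun X _ => and_iff_right_of_imp fun h => ?_
    rw [nonempty_iff_ne_empty]
    rintro rfl
    simp only [gcd_empty, Nat.gcd_zero_left] at h
    omega
  calc (#{X ∈ A.powerset | X.Nonempty ∧ Nat.gcd (X.gcd id) n = 1} : ℤ)
      = ∑ X ∈ A.powerset, if Nat.gcd (X.gcd id) n = 1 then 1 else 0 := by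
        rw [hcoprime, card_filter, Nat.cast_sum]; push_cast; rfl
    _ = ∑ X ∈ A.powerset, ∑ d ∈ n.divisors with d ∣ X.gcd id, (μ d : ℤ) := by
        simp only [sum_moebius_divisors_filter_dvd (by omega : n ≠ 0)]
    _ = ∑ d ∈ n.divisors, ∑ X ∈ A.powerset with d ∣ X.gcd id, (μ d : ℤ) := by
        simp only [sum_filter]; exact sum_comm
    _ = ∑ d ∈ n.divisors, μ d * 2 ^ #{x ∈ A | d ∣ x} := by
        simp only [sum_const, filter_powerset_dvd_gcd, card_powerset, nsmul_eq_mul]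
        push_cast
        simp only [mul_comm]

theorem stmt11_general (m1 l2 m2 n : ℕ) (h12 : m1 < l2) (h2 : l2 ≤ m2) (hn : 1 < n) :
    (((((Finset.Icc 1 m1) ∪ (Finset.Icc l2 m2)).powerset.filter
        (fun X => X.Nonempty ∧ Nat.gcd (X.gcd id) n = 1)).card : ℤ)) =
      ∑ d ∈ n.divisors, (ArithmeticFunction.moebius d) *
        2 ^ (m1 / d + m2 / d - (l2 - 1) / d) := by
  rw [card_filter_powerset_gcd_coprime _ hn]
  simp only [card_filter_dvd_Icc_union_Icc h12 (by omega : l2 ≤ m2 + 1)]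

theorem stmt11 (m1 l2 m2 n : ℕ) (hm1 : 0 < m1) (h12 : m1 < l2) (h2 : l2 ≤ m2) (hn : 1 < n) :
    (((((Finset.Icc 1 m1) ∪ (Finset.Icc l2 m2)).powerset.filter
        (fun X => X.Nonempty ∧ Nat.gcd (X.gcd id) n = 1)).card : ℤ)) =
      ∑ d ∈ n.divisors, (ArithmeticFunction.moebius d) *
        2 ^ (m1 / d + m2 / d - (l2 - 1) / d) :=
  stmt11_general m1 l2 m2 n h12 h2 hn
end

section
/- For positive integers m1 < l2 ≤ m2, n > 1, and k ≥ 1, the number of k-element subsets X of [1,m1] ∪ [l2,m2] with gcd(X ∪ {n}) = 1 equals the sum over divisors d of n of μ(d)·C(⌊m1/d⌋ + ⌊m2/d⌋ − ⌊(l2−1)/d⌋, k). -/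
/-!
Möbius inversion over the common divisors: `[gcd(X ∪ {n}) = 1] = ∑_{d ∣ n, d ∣ X} μ(d)`.
Summing over the `k`-subsets `X` of `A` and swapping the sums, `d` contributes `μ(d)` times the
number of `k`-subsets of the multiples of `d` in `A`. For `A = [1, m₁] ∪ [l₂, m₂]` there are
`⌊m₁/d⌋ + ⌊m₂/d⌋ - ⌊(l₂-1)/d⌋` such multiples.
-/

open Finset ArithmeticFunction
open scoped ArithmeticFunction.Moebius

namespace ArithmeticFunction

theorem sum_divisors_moebius (n : ℕ) :
    ∑ d ∈ n.divisors, (μ d : ℤ) = if n = 1 then 1 else 0 := by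
  rw [← coe_mul_zeta_apply, moebius_mul_coe_zeta, one_apply]

theorem ite_gcd_eq_one_eq_sum_moebius {n : ℕ} (hn : n ≠ 0) (X : Finset ℕ) :
    (if Nat.gcd (X.gcd id) n = 1 then 1 else 0 : ℤ) =
      ∑ d ∈ n.divisors with ∀ x ∈ X, d ∣ x, (μ d : ℤ) := by
  have hdivisors : (Nat.gcd (X.gcd id) n).divisors = {d ∈ n.divisors | ∀ x ∈ X, d ∣ x} := by
    rw [← Nat.divisors_filter_dvd_of_dvd hn (Nat.gcd_dvd_right _ _)]
    refine filter_congr fun d hd => ?_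
    rw [Nat.dvd_gcd_iff, Finset.dvd_gcd_iff]
    simp [(Nat.mem_divisors.1 hd).1]
  rw [← hdivisors, sum_divisors_moebius]

end ArithmeticFunction

theorem Finset.filter_forall_powersetCard {α : Type*} (s : Finset α) (p : α → Prop)
    [DecidablePred p] (k : ℕ) :
    {X ∈ s.powersetCard k | ∀ x ∈ X, p x} = {a ∈ s | p a}.powersetCard k := by
  ext X
  simp only [mem_filter, mem_powersetCard, subset_iff]
  grind

theorem card_powersetCard_filter_gcd_eq_one (A : Finset ℕ) {n : ℕ} (hn : n ≠ 0) (k : ℕ) :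
    (#{X ∈ A.powersetCard k | Nat.gcd (X.gcd id) n = 1} : ℤ) =
      ∑ d ∈ n.divisors, μ d * ((#{a ∈ A | d ∣ a}).choose k : ℤ) := by
  rw [card_filter, Nat.cast_sum]
  push_cast
  simp_rw [ite_gcd_eq_one_eq_sum_moebius hn, sum_filter]
  rw [sum_comm]
  refine sum_congr rfl fun d _ => ?_
  rw [← sum_filter, sum_const, nsmul_eq_mul, mul_comm, filter_forall_powersetCard,
    card_powersetCard]

theorem Nat.Ioc_filter_dvd_card {a b : ℕ} (d : ℕ) (hab : a ≤ b) :
    #{x ∈ Ioc a b | d ∣ x} = b / d - a / d := by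
  have hsplit := congrArg (fun s => #{x ∈ s | d ∣ x}) (Ioc_union_Ioc_eq_Ioc (Nat.zero_le a) hab)
  simp only [filter_union] at hsplit
  rw [card_union_of_disjoint (disjoint_filter_filter (Ioc_disjoint_Ioc_of_le le_rfl)),
    Ioc_filter_dvd_card_eq_div, Ioc_filter_dvd_card_eq_div] at hsplit
  omega

theorem Nat.Icc_filter_dvd_card {l m : ℕ} (d : ℕ) (hl : 0 < l) (hlm : l ≤ m + 1) :
    #{x ∈ Icc l m | d ∣ x} = m / d - (l - 1) / d := by
  have hIcc : Icc l m = Ioc (l - 1) m := by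
    ext x
    simp only [mem_Icc, mem_Ioc]
    omega
  rw [hIcc, Ioc_filter_dvd_card d (by omega)]

theorem stmt12_general (m1 l2 m2 n k : ℕ) (h12 : m1 < l2) (h2 : l2 ≤ m2)
    (hn : 1 < n) :
    (((((Finset.Icc 1 m1) ∪ (Finset.Icc l2 m2)).powerset.filter
        (fun X => X.card = k ∧ Nat.gcd (X.gcd id) n = 1)).card : ℤ)) =
      ∑ d ∈ n.divisors, (ArithmeticFunction.moebius d) *
        (Nat.choose (m1 / d + m2 / d - (l2 - 1) / d) k : ℤ) := by
  have hdisj : Disjoint (Icc 1 m1) (Icc l2 m2) :=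
    disjoint_left.2 fun x hx hx' => by simp only [mem_Icc] at hx hx'; omega
  rw [← filter_filter, ← powersetCard_eq_filter,
    card_powersetCard_filter_gcd_eq_one _ (by omega)]
  refine sum_congr rfl fun d _ => ?_
  have hmultiples : (l2 - 1) / d ≤ m2 / d := Nat.div_le_div_right (by omega)
  rw [filter_union, card_union_of_disjoint (disjoint_filter_filter hdisj),
    Nat.Icc_filter_dvd_card d Nat.one_pos (by omega),
    Nat.Icc_filter_dvd_card d (by omega) (by omega)]
  simp only [Nat.sub_self, Nat.zero_div, Nat.sub_zero, Nat.add_sub_assoc hmultiples]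

theorem stmt12 (m1 l2 m2 n k : ℕ) (hm1 : 0 < m1) (h12 : m1 < l2) (h2 : l2 ≤ m2)
    (hn : 1 < n) (hk : 1 ≤ k) :
    (((((Finset.Icc 1 m1) ∪ (Finset.Icc l2 m2)).powerset.filter
        (fun X => X.card = k ∧ Nat.gcd (X.gcd id) n = 1)).card : ℤ)) =
      ∑ d ∈ n.divisors, (ArithmeticFunction.moebius d) *
        (Nat.choose (m1 / d + m2 / d - (l2 - 1) / d) k : ℤ) :=
  stmt12_general m1 l2 m2 n k h12 h2 hn
end
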